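/- arXiv:1210.4493 — 2 statements merged into one kernel-verified Lean document; each statement's English description precedes it below -/
import Mathlib

section
/- Let χ be a multiplicative character of exact order N on a finite field F, and ε the trivial character. For any fixed nonzero ξ ∈ F, ∑_{j=1}^{N} χ^j(ξ) ∑_{a+b=1, a≠0} χ^j(b) = r − 1 − N·δ_N(ξ), where δ_N(ξ) = 1 if ξ is an N-th power in F^* and 0 otherwise. -/
open Finset
open scoped Classical

/-!
Substituting b = 1 - a, the inner sum is ∑_b χ^j(b) - 1. By orthogonality ∑_b χ^j(b) vanishes
unless χ^j is trivial, i.e. j = N, where it is r - 1; this gives the term r - 1. What remains is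
the geometric sum ∑_{j=1}^N χ(ξ)^j of an N-th root of unity, which is N when χ(ξ) = 1 and 0
otherwise. Finally, since F^* is cyclic, χ(ξ) = 1 exactly when ξ is an N-th power.
-/

theorem MonoidHom.orderOf_apply_generator {G H : Type*} [Group G] [CommGroup H] {g : G}
    (hg : ∀ x, x ∈ Subgroup.zpowers g) (φ : G →* H) : orderOf (φ g) = orderOf φ :=
  orderOf_eq_orderOf_iff.mpr fun n => by
    rw [MonoidHom.eq_iff_eq_on_generator hg (φ ^ n) 1, MonoidHom.pow_apply, MonoidHom.one_apply]

theorem MonoidHom.apply_eq_one_iff_exists_pow_orderOf {G H : Type*} [Group G] [IsCyclic G]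
    [CommGroup H] (φ : G →* H) (x : G) : φ x = 1 ↔ ∃ y, y ^ orderOf φ = x := by
  constructor
  · intro hx
    obtain ⟨g, hg⟩ := IsCyclic.exists_generator (α := G)
    obtain ⟨k, rfl⟩ := Subgroup.mem_zpowers_iff.mp (hg x)
    have hdvd : (orderOf φ : ℤ) ∣ k := by
      rwa [← φ.orderOf_apply_generator hg, orderOf_dvd_iff_zpow_eq_one, ← map_zpow]
    obtain ⟨m, rfl⟩ := hdvd
    exact ⟨g ^ m, by rw [← zpow_natCast, ← zpow_mul, mul_comm]⟩
  · rintro ⟨y, rfl⟩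
    rw [map_pow, ← MonoidHom.pow_apply, pow_orderOf_eq_one, MonoidHom.one_apply]

theorem MulChar.apply_eq_one_iff_exists_pow_orderOf {F R : Type*} [Field F] [Finite F]
    [CommMonoidWithZero R] (χ : MulChar F R) {ξ : F} (hξ : ξ ≠ 0) :
    χ ξ = 1 ↔ ∃ y : F, y ≠ 0 ∧ y ^ orderOf χ = ξ := by
  have hord : orderOf (mulEquivToUnitHom χ) = orderOf χ := MulEquiv.orderOf_eq _ χ
  have := (mulEquivToUnitHom χ).apply_eq_one_iff_exists_pow_orderOf (Units.mk0 ξ hξ)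
  rw [hord, Units.ext_iff, mulEquivToUnitHom_apply, coe_equivToUnitHom, Units.val_mk0,
    Units.val_one] at this
  rw [this]
  constructor
  · rintro ⟨v, hv⟩
    exact ⟨v, v.ne_zero, by rw [← Units.val_pow_eq_pow_val, hv, Units.val_mk0]⟩
  · rintro ⟨y, hy, rfl⟩
    exact ⟨Units.mk0 y hy, Units.ext (by simp)⟩

theorem sum_Icc_pow_of_pow_eq_one {R : Type*} [CommRing R] [NoZeroDivisors R] {c : R} {n : ℕ}
    (hc : c ^ n = 1) : ∑ j ∈ Icc 1 n, c ^ j = if c = 1 then (n : R) else 0 := by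
  split_ifs with h
  · simp [h]
  · have hgeom : (∑ j ∈ Icc 1 n, c ^ j) * (c - 1) = 0 := by
      rw [← Ico_add_one_right_eq_Icc, geom_sum_Ico_mul c (by omega), pow_succ, hc]
      ring
    exact (mul_eq_zero.mp hgeom).resolve_right (sub_ne_zero.mpr h)

theorem MulChar.sum_filter_ne_zero_apply_one_sub {F R : Type*} [CommRing F] [Fintype F]
    [CommRing R] (ψ : MulChar F R) :
    ∑ a ∈ univ.filter (fun a : F => a ≠ 0), ψ (1 - a) = ∑ b, ψ b - 1 := by
  rw [filter_ne' univ 0, sum_erase_eq_sub (mem_univ 0), sub_zero, map_one]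
  exact congrArg (· - 1) ((Equiv.subLeft (1 : F)).sum_comp ψ)

theorem MulChar.sum_Icc_pow_apply_mul_sum {M R : Type*} [CommMonoid M] [Fintype M]
    [CommRing R] [IsDomain R] (χ : MulChar M R) {ξ : M} (hξ : IsUnit ξ) :
    ∑ j ∈ Icc 1 (orderOf χ), (χ ^ j) ξ * ∑ b, (χ ^ j) b = Fintype.card Mˣ := by
  rw [sum_eq_single_of_mem (orderOf χ) (mem_Icc.mpr ⟨χ.orderOf_pos, le_rfl⟩)]
  · rw [pow_orderOf_eq_one, one_apply hξ, one_mul, sum_one_eq_card_units]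
  · intro j hj hne
    obtain ⟨hj₁, hjN⟩ := mem_Icc.mp hj
    have hχj : χ ^ j ≠ 1 := fun h =>
      hne (le_antisymm hjN (Nat.le_of_dvd hj₁ (orderOf_dvd_of_pow_eq_one h)))
    rw [sum_eq_zero_of_ne_one hχj, mul_zero]

theorem stmt_2_general {F : Type*} [Field F] [Fintype F] (N : ℕ)
    (χ : MulChar F ℂ) (hord : orderOf χ = N) (ξ : F) (hξ : ξ ≠ 0) :
    ∑ j ∈ Icc 1 N, (χ ^ j) ξ *
        ∑ a ∈ Finset.univ.filter (fun a : F => a ≠ 0), (χ ^ j) (1 - a)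
      = (Fintype.card F : ℂ) - 1 -
        N * (if ∃ y : F, y ≠ 0 ∧ y ^ N = ξ then 1 else 0) := by
  subst hord
  have hξN : χ ξ ^ orderOf χ = 1 := by
    rw [← χ.pow_apply' χ.orderOf_pos.ne', pow_orderOf_eq_one, MulChar.one_apply hξ.isUnit]
  have hpow : ∀ j ∈ Icc 1 (orderOf χ), (χ ^ j) ξ = χ ξ ^ j := fun j hj =>
    χ.pow_apply' (Nat.one_le_iff_ne_zero.mp (mem_Icc.mp hj).1) ξ
  simp_rw [MulChar.sum_filter_ne_zero_apply_one_sub, mul_sub, mul_one, sum_sub_distrib,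
    χ.sum_Icc_pow_apply_mul_sum hξ.isUnit, sum_congr rfl hpow, sum_Icc_pow_of_pow_eq_one hξN,
    ← χ.apply_eq_one_iff_exists_pow_orderOf hξ]
  rw [Fintype.card_units, Nat.cast_sub Fintype.card_pos, Nat.cast_one, mul_ite, mul_one, mul_zero]

/-- For χ of exact order N on F and ξ ≠ 0,
∑_{j=1}^{N} χ^j(ξ) ∑_{a+b=1, a≠0} χ^j(b) = r − 1 − N·δ_N(ξ). -/
theorem stmt_2 {F : Type*} [Field F] [Fintype F] (N : ℕ) (hN : 0 < N)
    (χ : MulChar F ℂ) (hord : orderOf χ = N) (ξ : F) (hξ : ξ ≠ 0) :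
    ∑ j ∈ Icc 1 N, (χ ^ j) ξ *
        ∑ a ∈ Finset.univ.filter (fun a : F => a ≠ 0), (χ ^ j) (1 - a)
      = (Fintype.card F : ℂ) - 1 -
        N * (if ∃ y : F, y ≠ 0 ∧ y ^ N = ξ then 1 else 0) :=
  stmt_2_general N χ hord ξ hξ
end

section
/- Suppose χ is a multiplicative character of exact order N on a finite field F of order r, and suppose J(χ^i, χ^j) = √r for all 1 ≤ i,j ≤ N−1 with i+j ≠ N (as complex numbers, where r is a square). Then for nonzero u, v ∈ F, ∑_{1≤i,j≤N−1, i+j≠N} χ^i(u) χ^j(v) J(χ^i, χ^j) = √r · ( N² δ_N(u) δ_N(v) − N(δ_N(u) + δ_N(v) + δ_N(u v^{−1})) + 2 ). -/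
/-!
Once every Jacobi sum is replaced by √r, the double sum is a product of two character sums
minus its diagonal j = N - i, whose terms are χ^i(u) χ^(N-i)(v) = χ^i(u v⁻¹). Each remaining
sum ∑_{i=1}^{N-1} χ^i(w) equals N δ_N(w) - 1: the full geometric sum over i < N is N or 0
according as χ(w) = 1, and since F^× is cyclic, χ(w) = 1 exactly when w is an N-th power.
-/

open Finset
open scoped Classical

theorem Finset.sum_Icc_sum_Icc_ite_add_ne {R : Type*} [CommRing R] (n : ℕ) (f g : ℕ → R) :
    ∑ i ∈ Icc 1 (n - 1), ∑ j ∈ Icc 1 (n - 1), (if i + j ≠ n then f i * g j else 0)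
      = (∑ i ∈ Icc 1 (n - 1), f i) * (∑ j ∈ Icc 1 (n - 1), g j)
        - ∑ i ∈ Icc 1 (n - 1), f i * g (n - i) := by
  rw [sum_mul_sum, ← sum_sub_distrib]
  refine sum_congr rfl fun i hi => ?_
  have hcompl : n - i ∈ Icc 1 (n - 1) := by simp only [mem_Icc] at hi ⊢; omega
  rw [← sum_ite_eq_of_mem' _ _ (fun j => f i * g j) hcompl, ← sum_sub_distrib]
  refine sum_congr rfl fun j hj => ?_
  simp only [mem_Icc] at hi hj
  by_cases h : j = n - i
  · rw [if_neg (by omega), if_pos h, sub_self]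
  · rw [if_pos (by omega), if_neg h, sub_zero]

namespace MulChar

theorem pow_apply_mul_pow_orderOf_sub_apply {G R : Type*} [CommGroupWithZero G] [CommRing R]
    (χ : MulChar G R) {i : ℕ} (hi : i ≤ orderOf χ) (u v : G) :
    (χ ^ i) u * (χ ^ (orderOf χ - i)) v = (χ ^ i) (u * v⁻¹) := by
  rw [pow_sub χ hi, pow_orderOf_eq_one, one_mul, inv_apply', map_mul]

theorem sum_range_orderOf_pow_apply {M R : Type*} [CommMonoid M] [CommRing R] [IsDomain R]
    (χ : MulChar M R) {a : M} (ha : IsUnit a) :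
    ∑ i ∈ range (orderOf χ), (χ ^ i) a = if χ a = 1 then (orderOf χ : R) else 0 := by
  have hpow (i : ℕ) : (χ ^ i) a = χ a ^ i := pow_apply_coe χ i ha.unit
  simp only [hpow]
  split_ifs with h
  · simp [h]
  · have hroot : χ a ^ orderOf χ = 1 := by
      rw [← hpow, pow_orderOf_eq_one, one_apply ha]
    have := geom_sum_mul (χ a) (orderOf χ)
    rw [hroot, sub_self] at this
    exact (mul_eq_zero.mp this).resolve_right (sub_ne_zero.mpr h)

variable {F R : Type*} [Field F] [Fintype F] [CommRing R]

theorem apply_eq_one_iff_exists_pow_orderOf_s4 (χ : MulChar F R) {a : F} (ha : a ≠ 0) :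
    χ a = 1 ↔ ∃ y : F, y ≠ 0 ∧ y ^ orderOf χ = a := by
  have ha' : IsUnit a := ha.isUnit
  constructor
  · intro h1
    obtain ⟨g, hg⟩ := IsCyclic.exists_generator (α := Fˣ)
    have hog : orderOf (χ g) = orderOf χ := by
      refine orderOf_eq_orderOf_iff.mpr fun n => ?_
      rw [← pow_apply_coe, ← one_apply_coe (R' := R) g]
      exact (eq_iff hg (χ ^ n) 1).symm
    obtain ⟨k, hk⟩ := (mem_powers_iff_mem_zpowers (y := ha'.unit)).mpr (hg ha'.unit)
    have hak : a = (g : F) ^ k := by rw [← ha'.unit_spec, ← hk, Units.val_pow_eq_pow_val]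
    obtain ⟨m, rfl⟩ : orderOf χ ∣ k := by
      rw [← hog]
      exact orderOf_dvd_of_pow_eq_one (by rw [← map_pow, ← hak, h1])
    exact ⟨(g : F) ^ m, pow_ne_zero m g.ne_zero, by rw [← pow_mul, mul_comm, hak]⟩
  · rintro ⟨y, hy, rfl⟩
    rw [map_pow, ← pow_apply' χ χ.orderOf_pos.ne', pow_orderOf_eq_one, one_apply hy.isUnit]

theorem sum_Icc_pow_apply [IsDomain R] (χ : MulChar F R) {a : F} (ha : a ≠ 0) :
    ∑ i ∈ Icc 1 (orderOf χ - 1), (χ ^ i) a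
      = orderOf χ * (if ∃ y : F, y ≠ 0 ∧ y ^ orderOf χ = a then 1 else 0) - 1 := by
  have hpos := χ.orderOf_pos
  have hsplit := sum_range_eq_add_Ico (fun i => (χ ^ i) a) hpos
  rw [sum_range_orderOf_pow_apply χ ha.isUnit, pow_zero, one_apply ha.isUnit,
    ← Icc_sub_one_right_eq_Ico_of_not_isMin (by simpa using hpos.ne')] at hsplit
  have hiff := apply_eq_one_iff_exists_pow_orderOf_s4 χ ha
  by_cases h : χ a = 1
  · rw [if_pos h] at hsplit
    rw [if_pos (hiff.mp h)]
    linear_combination -hsplit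
  · rw [if_neg h] at hsplit
    rw [if_neg (mt hiff.mpr h)]
    linear_combination -hsplit

end MulChar

theorem stmt_4_general {F : Type*} [Field F] [Fintype F] (N : ℕ)
    (χ : MulChar F ℂ) (hord : orderOf χ = N)
    (hJ : ∀ i j : ℕ, 1 ≤ i → i ≤ N - 1 → 1 ≤ j → j ≤ N - 1 → i + j ≠ N →
      ∑ a : F, (χ ^ i) a * (χ ^ j) (1 - a) = Real.sqrt (Fintype.card F))
    (u v : F) (hu : u ≠ 0) (hv : v ≠ 0) :
    ∑ i ∈ Icc 1 (N - 1), ∑ j ∈ Icc 1 (N - 1),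
        (if i + j ≠ N then
          (χ ^ i) u * (χ ^ j) v * ∑ a : F, (χ ^ i) a * (χ ^ j) (1 - a)
        else 0)
      = (Real.sqrt (Fintype.card F) : ℂ) *
        ((N : ℂ) ^ 2 * (if ∃ y : F, y ≠ 0 ∧ y ^ N = u then 1 else 0) *
            (if ∃ y : F, y ≠ 0 ∧ y ^ N = v then 1 else 0)
          - N * ((if ∃ y : F, y ≠ 0 ∧ y ^ N = u then 1 else 0)
              + (if ∃ y : F, y ≠ 0 ∧ y ^ N = v then 1 else 0)
              + (if ∃ y : F, y ≠ 0 ∧ y ^ N = u * v⁻¹ then 1 else 0))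
          + 2) := by
  subst hord
  calc _ = (Real.sqrt (Fintype.card F) : ℂ) * ∑ i ∈ Icc 1 (orderOf χ - 1),
        ∑ j ∈ Icc 1 (orderOf χ - 1), (if i + j ≠ orderOf χ then (χ ^ i) u * (χ ^ j) v else 0) := by
        rw [mul_sum]
        refine sum_congr rfl fun i hi => ?_
        rw [mul_sum]
        refine sum_congr rfl fun j hj => ?_
        simp only [mem_Icc] at hi hj
        split_ifs with h
        · rw [hJ i j hi.1 hi.2 hj.1 hj.2 h, mul_comm]
        · rw [mul_zero]
    _ = _ := by
        rw [sum_Icc_sum_Icc_ite_add_ne, sum_congr rfl fun i hi =>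
            χ.pow_apply_mul_pow_orderOf_sub_apply (by simp only [mem_Icc] at hi; omega) u v,
          χ.sum_Icc_pow_apply hu, χ.sum_Icc_pow_apply hv,
          χ.sum_Icc_pow_apply (mul_ne_zero hu (inv_ne_zero hv))]
        ring

/-- If all Jacobi sums J(χ^i,χ^j) with 1 ≤ i,j ≤ N−1, i+j ≠ N equal √r, then
∑_{1≤i,j≤N−1, i+j≠N} χ^i(u) χ^j(v) J(χ^i,χ^j)
  = √r (N² δ_N(u) δ_N(v) − N(δ_N(u)+δ_N(v)+δ_N(uv⁻¹)) + 2). -/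
theorem stmt_4 {F : Type*} [Field F] [Fintype F] (N : ℕ) (hN : 2 ≤ N)
    (χ : MulChar F ℂ) (hord : orderOf χ = N) (hχ : χ (-1) = 1)
    (hsq : ∃ t : ℕ, Fintype.card F = t ^ 2)
    (hJ : ∀ i j : ℕ, 1 ≤ i → i ≤ N - 1 → 1 ≤ j → j ≤ N - 1 → i + j ≠ N →
      ∑ a : F, (χ ^ i) a * (χ ^ j) (1 - a) = Real.sqrt (Fintype.card F))
    (u v : F) (hu : u ≠ 0) (hv : v ≠ 0) :
    ∑ i ∈ Icc 1 (N - 1), ∑ j ∈ Icc 1 (N - 1),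
        (if i + j ≠ N then
          (χ ^ i) u * (χ ^ j) v * ∑ a : F, (χ ^ i) a * (χ ^ j) (1 - a)
        else 0)
      = (Real.sqrt (Fintype.card F) : ℂ) *
        ((N : ℂ) ^ 2 * (if ∃ y : F, y ≠ 0 ∧ y ^ N = u then 1 else 0) *
            (if ∃ y : F, y ≠ 0 ∧ y ^ N = v then 1 else 0)
          - N * ((if ∃ y : F, y ≠ 0 ∧ y ^ N = u then 1 else 0)
              + (if ∃ y : F, y ≠ 0 ∧ y ^ N = v then 1 else 0)
              + (if ∃ y : F, y ≠ 0 ∧ y ^ N = u * v⁻¹ then 1 else 0))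
          + 2) :=
  stmt_4_general N χ hord hJ u v hu hv
end
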